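/- arXiv:1506.06352 — 2 statements merged into one kernel-verified Lean document; each statement's English description precedes it below -/
import Mathlib

section
/- Let k be a field whose characteristic does not divide r. Then the Dynkin–Specht–Wever element e_r = (1/r)(1 − γ_2)(1 − γ_3)⋯(1 − γ_r) in kΣ_r, where for 2 ≤ i ≤ r, γ_i denotes the descending i-cycle (i ⋯ 2 1), is a Lie idempotent: e_r² = e_r and T^{n,r}·e_r = L^{n,r}. -/
open MulOpposite

noncomputable section

variable (k : Type*) [Field k] (n r : ℕ)

/-- `T^{n,r} = (k^n)^{⊗r}`, the `r`-th tensor power of `k^n`. -/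
abbrev TP := TensorPower k r (Fin n → k)

/-- The place permutation `v_1 ⊗ ⋯ ⊗ v_r ↦ v_{σ(1)} ⊗ ⋯ ⊗ v_{σ(r)}` (a right action). -/
def permAct (σ : Equiv.Perm (Fin r)) : Module.End k (TP k n r) :=
  (PiTensorProduct.reindex k (fun _ : Fin r => (Fin n → k)) σ⁻¹).toLinearMap

lemma permAct_tprod (σ : Equiv.Perm (Fin r)) (f : Fin r → (Fin n → k)) :
    permAct k n r σ (PiTensorProduct.tprod k f) = PiTensorProduct.tprod k (f ∘ σ) := by
  simp [permAct, PiTensorProduct.reindex_tprod]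
  rfl

/-- The right action of the group algebra `kΣ_r` on `T^{n,r}`,
as an algebra map into `(End T)ᵐᵒᵖ`. -/
def rho : MonoidAlgebra k (Equiv.Perm (Fin r)) →ₐ[k] (Module.End k (TP k n r))ᵐᵒᵖ :=
  MonoidAlgebra.lift k _ (Equiv.Perm (Fin r))
    { toFun := fun σ => op (permAct k n r σ)
      map_one' := by
        apply congrArg op
        apply PiTensorProduct.ext
        apply MultilinearMap.ext
        intro f
        simp [permAct_tprod]
      map_mul' := fun σ τ => by
        rw [← op_mul]
        apply congrArg op
        apply PiTensorProduct.ext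
        apply MultilinearMap.ext
        intro f
        simp only [LinearMap.compMultilinearMap_apply, permAct_tprod, Module.End.mul_apply]
        rw [Equiv.Perm.coe_mul]
        rfl }

/-- The right action of `x ∈ kΣ_r` on `T^{n,r}`. -/
def ract (x : MonoidAlgebra k (Equiv.Perm (Fin r))) : Module.End k (TP k n r) :=
  (rho k n r x).unop

lemma ract_mul (x y : MonoidAlgebra k (Equiv.Perm (Fin r))) :
    ract k n r (x * y) = ract k n r y * ract k n r x := by
  simp [ract, map_mul]

/-- The diagonal action of `g ∈ GL_n(k)` on `T^{n,r}`. -/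
def glAct (g : GL (Fin n) k) : Module.End k (TP k n r) :=
  PiTensorProduct.map (fun _ => (g : Matrix (Fin n) (Fin n) k).mulVecLin)

attribute [local instance 100] LieRing.ofAssociativeRing

/-- The free Lie algebra `L(k^n)`: the Lie subalgebra of the tensor algebra
generated by `k^n`. -/
def freeLie : LieSubalgebra k (TensorAlgebra k (Fin n → k)) :=
  LieSubalgebra.lieSpan k _ (Set.range (TensorAlgebra.ι k))

/-- The canonical (injective) linear map from the `r`-th tensor power to the
tensor algebra. -/
def iotaR : TP k n r →ₗ[k] TensorAlgebra k (Fin n → k) :=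
  TensorPower.toTensorAlgebra

/-- `L^{n,r} = L(k^n) ∩ T^{n,r}`: the homogeneous Lie polynomials of degree `r`,
viewed inside the `r`-th tensor power. -/
def Lnr : Submodule k (TP k n r) :=
  Submodule.comap (iotaR k n r) (freeLie k n).toSubmodule

/-- The algebra endomorphism of the tensor algebra induced by `g ∈ GL_n(k)`. -/
def glTA (g : GL (Fin n) k) :
    TensorAlgebra k (Fin n → k) →ₐ[k] TensorAlgebra k (Fin n → k) :=
  TensorAlgebra.lift k ((TensorAlgebra.ι k) ∘ₗ (g : Matrix (Fin n) (Fin n) k).mulVecLin)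

lemma iotaR_glAct (g : GL (Fin n) k) :
    iotaR k n r ∘ₗ glAct k n r g = (glTA k n g).toLinearMap ∘ₗ iotaR k n r := by
  apply PiTensorProduct.ext
  apply MultilinearMap.ext
  intro f
  simp only [LinearMap.compMultilinearMap_apply, LinearMap.coe_comp, Function.comp_apply,
    glAct, PiTensorProduct.map_tprod, AlgHom.toLinearMap_apply]
  rw [iotaR, TensorPower.toTensorAlgebra_tprod, TensorPower.toTensorAlgebra_tprod,
    TensorAlgebra.tprod_apply, TensorAlgebra.tprod_apply, map_list_prod, List.map_ofFn]
  congr 1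
  congr 1
  funext i
  simp [glTA, TensorAlgebra.lift_ι_apply]

lemma glTA_freeLie (g : GL (Fin n) k) :
    ∀ x ∈ freeLie k n, glTA k n g x ∈ freeLie k n := by
  intro x hx
  have h : freeLie k n ≤ LieSubalgebra.comap (glTA k n g).toLieHom (freeLie k n) := by
    rw [freeLie, LieSubalgebra.lieSpan_le]
    rintro y ⟨v, rfl⟩
    show glTA k n g (TensorAlgebra.ι k v) ∈ freeLie k n
    rw [glTA, TensorAlgebra.lift_ι_apply]
    exact LieSubalgebra.subset_lieSpan ⟨_, rfl⟩
  exact h hx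

lemma glAct_mem_Lnr (g : GL (Fin n) k) :
    ∀ x ∈ Lnr k n r, glAct k n r g x ∈ Lnr k n r := by
  intro x hx
  show iotaR k n r (glAct k n r g x) ∈ (freeLie k n).toSubmodule
  have := congrArg (fun F : TP k n r →ₗ[k] TensorAlgebra k (Fin n → k) => F x)
    (iotaR_glAct k n r g)
  simp only [LinearMap.coe_comp, Function.comp_apply] at this
  rw [this]
  exact glTA_freeLie k n g _ hx

/-- `Φ_e(g)`: the action of `g ∈ GL_n(k)` on `L^{n,r}`. -/
def glRes (g : GL (Fin n) k) : Module.End k ↥(Lnr k n r) :=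
  (glAct k n r g).restrict (glAct_mem_Lnr k n r g)

lemma ract_mem_Lnr (e : MonoidAlgebra k (Equiv.Perm (Fin r)))
    (hLie : LinearMap.range (ract k n r e) = Lnr k n r)
    (b : MonoidAlgebra k (Equiv.Perm (Fin r))) :
    ∀ x ∈ Lnr k n r, ract k n r (e * b * e) x ∈ Lnr k n r := by
  intro x _
  rw [← hLie]
  rw [show e * b * e = (e * b) * e from rfl, ract_mul]
  exact ⟨ract k n r (e * b) x, rfl⟩

/-- `Ψ_e(ebe)`: the action of `e*b*e ∈ e kΣ_r e` on `L^{n,r}`. -/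
def psiRes (e : MonoidAlgebra k (Equiv.Perm (Fin r)))
    (hLie : LinearMap.range (ract k n r e) = Lnr k n r)
    (b : MonoidAlgebra k (Equiv.Perm (Fin r))) : Module.End k ↥(Lnr k n r) :=
  (ract k n r (e * b * e)).restrict (ract_mem_Lnr k n r e hLie b)

/-- `End_{GL_n(k)}(L^{n,r})`. -/
def EndGL : Set (Module.End k ↥(Lnr k n r)) :=
  {f | ∀ g : GL (Fin n) k, f ∘ₗ glRes k n r g = glRes k n r g ∘ₗ f}

/-- `End_{e kΣ_r e}(L^{n,r})`. -/
def EndeBe (e : MonoidAlgebra k (Equiv.Perm (Fin r)))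
    (hLie : LinearMap.range (ract k n r e) = Lnr k n r) :
    Set (Module.End k ↥(Lnr k n r)) :=
  {f | ∀ b, f ∘ₗ psiRes k n r e hLie b = psiRes k n r e hLie b ∘ₗ f}

/-- `Φ_e(k GL_n(k))`: the image of the group algebra of `GL_n(k)` in
`End_k(L^{n,r})`, i.e. the `k`-span of the operators coming from group elements. -/
def PhiImage : Set (Module.End k ↥(Lnr k n r)) :=
  ↑(Submodule.span k (Set.range (glRes k n r)))

/-- The triple `(k GL_n(k), L^{n,r}, e kΣ_r e)` satisfies Schur-Weyl duality. -/
def LieSWD (e : MonoidAlgebra k (Equiv.Perm (Fin r)))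
    (hLie : LinearMap.range (ract k n r e) = Lnr k n r) : Prop :=
  PhiImage k n r = EndeBe k n r e hLie ∧
  Set.range (psiRes k n r e hLie) = EndGL k n r

end

noncomputable section

variable (k : Type*) [Field k] (r : ℕ)

/-- The Dynkin-Specht-Wever element
`e_r = (1/r)(1 - γ_2)(1 - γ_3) ⋯ (1 - γ_r)`, where `γ_i` is the descending `i`-cycle
`(i ⋯ 2 1)`.  (In the `0`-indexed encoding, the descending `(i+1)`-cycle is
`(Fin.cycleRange i)⁻¹` for `i = 1, …, r-1`.) -/
def dsw : MonoidAlgebra k (Equiv.Perm (Fin r)) :=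
  (r : k)⁻¹ • (((List.finRange r).drop 1).map
    (fun i => (1 : MonoidAlgebra k (Equiv.Perm (Fin r))) -
      MonoidAlgebra.of k (Equiv.Perm (Fin r)) ((Fin.cycleRange i)⁻¹))).prod

end

/-!
Let `Θ` be Dynkin's operator on the tensor algebra, the left-normed bracketing
`v₁ ⋯ vₘ ↦ ⁅⋯⁅v₁, v₂⁆, ⋯, vₘ⁆`, and `N` the Euler operator, which multiplies a tensor of degree
`d` by `d`. Every `Θ x` is a Lie element, and `Θ = N` on Lie elements, because on brackets both
satisfy `Θ ⁅a, b⁆ = ⁅Θ a, b⁆ + ⁅a, Θ b⁆` (Dynkin–Specht–Wever).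

Since `γ_{m+1}` moves the last tensor factor to the front, `(x ⊗ v)(1 - γ_{m+1}) = ⁅x, v⁆`, and
induction on `r` shows that `ω_r = (1 - γ₂) ⋯ (1 - γ_r)` acts on `T^{n,r}` as `Θ`. Hence
`T^{n,r} ω_r ⊆ L^{n,r}` and `ω_r` acts on `L^{n,r}` as multiplication by `r`, so `e_r = ω_r / r`
projects `T^{n,r}` onto `L^{n,r}`. Finally `ω_r² = r ω_r` in `kΣ_r`, because `kΣ_r` acts
faithfully on `T^{r,r}`.
-/

namespace TensorAlgebra

section SnocRec

variable {R M : Type*} [CommSemiring R] [AddCommMonoid M] [Module R M]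
  (B : M →ₗ[R] (TensorAlgebra R M × TensorAlgebra R M) →ₗ[R] TensorAlgebra R M)

/-- Recursion on the last letter, encoded as an algebra map into `(End (T × T))ᵐᵒᵖ`: the letter
`v` sends a pair (word `x` read so far, value on `x`) to `(x * v, B v (x, value))`. The recursive
map `snocRec B` reads the value off the image of `(1, 0)`. -/
def snocStep : M →ₗ[R] (Module.End R (TensorAlgebra R M × TensorAlgebra R M))ᵐᵒᵖ where
  toFun v := op
    { toFun := fun p => (p.1 * ι R v, B v p)
      map_add' := fun p q => by simp [add_mul]
      map_smul' := fun c p => by simp }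
  map_add' v w := by
    rw [← op_add]
    exact congrArg op (LinearMap.ext fun p => by simp [mul_add])
  map_smul' c v := by
    rw [← op_smul]
    exact congrArg op (LinearMap.ext fun p => by simp)

def snocRec : TensorAlgebra R M →ₗ[R] TensorAlgebra R M :=
  LinearMap.snd R (TensorAlgebra R M) (TensorAlgebra R M) ∘ₗ LinearMap.applyₗ (1, 0) ∘ₗ
    (opLinearEquiv R).symm.toLinearMap ∘ₗ (lift R (snocStep B)).toLinearMap

lemma snocRec_apply (x : TensorAlgebra R M) :
    snocRec B x = ((lift R (snocStep B) x).unop (1, 0)).2 :=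
  rfl

lemma fst_lift_snocStep (x : TensorAlgebra R M) (p : TensorAlgebra R M × TensorAlgebra R M) :
    ((lift R (snocStep B) x).unop p).1 = p.1 * x := by
  induction x using TensorAlgebra.induction generalizing p with
  | algebraMap c => simp [Algebra.smul_def, Algebra.commutes]
  | ι v => simp [snocStep]
  | mul x y hx hy => simp [hx, hy, mul_assoc]
  | add x y hx hy => simp [hx, hy, mul_add]

@[simp]
lemma snocRec_algebraMap (c : R) : snocRec B (algebraMap R (TensorAlgebra R M) c) = 0 := by
  simp [snocRec_apply]

@[simp]
lemma snocRec_one : snocRec B 1 = 0 := by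
  simpa using snocRec_algebraMap B 1

lemma snocRec_mul_ι (x : TensorAlgebra R M) (v : M) :
    snocRec B (x * ι R v) = B v (x, snocRec B x) := by
  have hx : (lift R (snocStep B) x).unop (1, 0) = (x, snocRec B x) :=
    Prod.ext (by simp [fst_lift_snocStep]) rfl
  rw [snocRec_apply, map_mul, unop_mul, Module.End.mul_apply, hx, lift_ι_apply]
  rfl

end SnocRec

section Euler

variable (R M : Type*) [CommSemiring R] [AddCommMonoid M] [Module R M]

def eulerOperator : TensorAlgebra R M →ₗ[R] TensorAlgebra R M :=
  snocRec (LinearMap.mk₂ R (fun v p => p.2 * ι R v + p.1 * ι R v)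
    (fun v w p => by simp [mul_add]; abel)
    (fun c v p => by simp [smul_add])
    (fun v p q => by simp [add_mul]; abel)
    (fun c v p => by simp [smul_add]))

variable {R M}

lemma eulerOperator_mul_ι (x : TensorAlgebra R M) (v : M) :
    eulerOperator R M (x * ι R v) = eulerOperator R M x * ι R v + x * ι R v :=
  snocRec_mul_ι _ x v

lemma eulerOperator_ι (v : M) : eulerOperator R M (ι R v) = ι R v := by
  simpa [eulerOperator] using eulerOperator_mul_ι (1 : TensorAlgebra R M) v

lemma eulerOperator_mul (x y : TensorAlgebra R M) :
    eulerOperator R M (x * y) = eulerOperator R M x * y + x * eulerOperator R M y := by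
  induction y using TensorAlgebra.induction generalizing x with
  | algebraMap c => simp [eulerOperator, ← Algebra.commutes, ← Algebra.smul_def]
  | ι v => rw [eulerOperator_mul_ι, eulerOperator_ι]
  | mul y z hy hz => rw [← mul_assoc, hz, hy, hz]; noncomm_ring
  | add y z hy hz => simp only [mul_add, map_add, hy, hz]; abel

lemma eulerOperator_list_prod_map_ι (l : List M) :
    eulerOperator R M (l.map (ι R)).prod = l.length • (l.map (ι R)).prod := by
  induction l with
  | nil => simp [eulerOperator]
  | cons v l ih =>
    rw [List.map_cons, List.prod_cons, eulerOperator_mul, eulerOperator_ι, ih, List.length_cons,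
      succ_nsmul', mul_smul_comm]

lemma eulerOperator_toTensorAlgebra {d : ℕ} (x : TensorPower R d M) :
    eulerOperator R M (TensorPower.toTensorAlgebra x) = d • TensorPower.toTensorAlgebra x := by
  induction x using PiTensorProduct.induction_on with
  | smul_tprod c f =>
    have h : (List.ofFn fun i => ι R (f i)) = (List.ofFn f).map (ι R) := List.map_ofFn.symm
    simp only [map_smul, TensorPower.toTensorAlgebra_tprod, tprod_apply, h,
      eulerOperator_list_prod_map_ι, List.length_ofFn, smul_comm c]
  | add x y hx hy => simp [hx, hy]

end Euler

section Dynkin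

variable (R M : Type*) [CommRing R] [AddCommGroup M] [Module R M]

attribute [local instance 100] LieRing.ofAssociativeRing

/-- Dynkin's operator, the left-normed bracketing `v₁ ⋯ vₘ ↦ ⁅⋯⁅v₁, v₂⁆, ⋯, vₘ⁆` on words of
positive length, and `0` on scalars. -/
def dynkinOperator : TensorAlgebra R M →ₗ[R] TensorAlgebra R M :=
  snocRec (LinearMap.mk₂ R (fun v p => ⁅p.2, ι R v⁆ + algebraMapInv p.1 • ι R v)
    (fun v w p => by simp; abel)
    (fun c v p => by simp [Ring.lie_def, smul_add, smul_sub, smul_smul, mul_comm])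
    (fun v p q => by simp [add_smul]; abel)
    (fun c v p => by simp [smul_add, smul_smul]))

variable {R M}

lemma dynkinOperator_mul_ι (x : TensorAlgebra R M) (v : M) :
    dynkinOperator R M (x * ι R v) = ⁅dynkinOperator R M x, ι R v⁆ + algebraMapInv x • ι R v :=
  snocRec_mul_ι _ x v

lemma dynkinOperator_ι (v : M) : dynkinOperator R M (ι R v) = ι R v := by
  simpa [dynkinOperator] using dynkinOperator_mul_ι (1 : TensorAlgebra R M) v

lemma dynkinOperator_mem_lieSpan (x : TensorAlgebra R M) :
    dynkinOperator R M x ∈ LieSubalgebra.lieSpan R _ (Set.range (ι R)) := by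
  set L := LieSubalgebra.lieSpan R (TensorAlgebra R M) (Set.range (ι R))
  have hι (v : M) : ι R v ∈ L := LieSubalgebra.subset_lieSpan ⟨v, rfl⟩
  suffices h : ∀ a, dynkinOperator R M a ∈ L → dynkinOperator R M (a * x) ∈ L by
    simpa using h 1 (by simp [dynkinOperator, L.zero_mem])
  induction x using TensorAlgebra.induction with
  | algebraMap c =>
    intro a ha
    rw [← Algebra.commutes, ← Algebra.smul_def, map_smul]
    exact L.smul_mem c ha
  | ι v =>
    intro a ha
    rw [dynkinOperator_mul_ι]
    exact L.add_mem (L.lie_mem ha (hι v)) (L.smul_mem _ (hι v))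
  | mul x y hx hy => exact fun a ha => mul_assoc a x y ▸ hy _ (hx a ha)
  | add x y hx hy =>
    intro a ha
    rw [mul_add, map_add]
    exact L.add_mem (hx a ha) (hy a ha)

variable {b : TensorAlgebra R M}

lemma algebraMapInv_eq_zero_of_mem_lieSpan
    (hb : b ∈ LieSubalgebra.lieSpan R _ (Set.range (ι R))) : algebraMapInv b = 0 := by
  induction hb using LieSubalgebra.lieSpan_induction with
  | mem b hb => obtain ⟨v, rfl⟩ := hb; simp [algebraMapInv]
  | zero => simp
  | add b c _ _ hb hc => simp [hb, hc]
  | smul c b _ hb => simp [hb]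
  | lie b c _ _ hb hc => simp [Ring.lie_def, hb, hc]

lemma dynkinOperator_mul_of_mem_lieSpan
    (hb : b ∈ LieSubalgebra.lieSpan R _ (Set.range (ι R))) (x : TensorAlgebra R M) :
    dynkinOperator R M (x * b) =
      ⁅dynkinOperator R M x, b⁆ + algebraMapInv x • dynkinOperator R M b := by
  induction hb using LieSubalgebra.lieSpan_induction generalizing x with
  | mem b hb => obtain ⟨v, rfl⟩ := hb; rw [dynkinOperator_mul_ι, dynkinOperator_ι]
  | zero => simp
  | add b c _ _ hb hc => simp only [mul_add, map_add, hb, hc, lie_add, smul_add]; abel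
  | smul c b _ hb =>
    simp only [mul_smul_comm, map_smul, hb, smul_add, Ring.lie_def, smul_sub, smul_mul_assoc,
      smul_comm c]
  | lie b c hbL hcL hb hc =>
    have hεb := algebraMapInv_eq_zero_of_mem_lieSpan hbL
    have hεc := algebraMapInv_eq_zero_of_mem_lieSpan hcL
    have hbc : dynkinOperator R M ⁅b, c⁆ =
        ⁅dynkinOperator R M b, c⁆ - ⁅dynkinOperator R M c, b⁆ := by
      rw [Ring.lie_def, map_sub, hc, hb, hεb, hεc, zero_smul, zero_smul, add_zero, add_zero]
    calc dynkinOperator R M (x * ⁅b, c⁆)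
        = dynkinOperator R M (x * b * c) - dynkinOperator R M (x * c * b) := by
          rw [Ring.lie_def, mul_sub, ← mul_assoc, ← mul_assoc, map_sub]
      _ = ⁅⁅dynkinOperator R M x, b⁆ + algebraMapInv x • dynkinOperator R M b, c⁆
            - ⁅⁅dynkinOperator R M x, c⁆ + algebraMapInv x • dynkinOperator R M c, b⁆ := by
          simp only [hc, hb, map_mul, hεb, hεc, mul_zero, zero_smul, add_zero]
      _ = _ := by
          rw [hbc]
          simp only [Ring.lie_def, smul_sub]
          noncomm_ring

lemma dynkinOperator_eq_eulerOperator_of_mem_lieSpan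
    (hb : b ∈ LieSubalgebra.lieSpan R _ (Set.range (ι R))) :
    dynkinOperator R M b = eulerOperator R M b := by
  induction hb using LieSubalgebra.lieSpan_induction with
  | mem b hb => obtain ⟨v, rfl⟩ := hb; rw [dynkinOperator_ι, eulerOperator_ι]
  | zero => simp
  | add b c _ _ hb hc => simp [hb, hc]
  | smul c b _ hb => simp [hb]
  | lie b c hbL hcL hb hc =>
    rw [Ring.lie_def, map_sub, map_sub, dynkinOperator_mul_of_mem_lieSpan hcL,
      dynkinOperator_mul_of_mem_lieSpan hbL, algebraMapInv_eq_zero_of_mem_lieSpan hbL,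
      algebraMapInv_eq_zero_of_mem_lieSpan hcL, eulerOperator_mul, eulerOperator_mul, hb, hc]
    simp only [zero_smul, add_zero, Ring.lie_def]
    noncomm_ring

end Dynkin

end TensorAlgebra

namespace TensorPower

open TensorAlgebra

variable {R M : Type*} [CommSemiring R] [AddCommMonoid M] [Module R M] {d : ℕ}

lemma toDirectSum_toTensorAlgebra (x : TensorPower R d M) :
    toDirectSum (toTensorAlgebra x) = DirectSum.of _ d x := by
  induction x using PiTensorProduct.induction_on with
  | smul_tprod c f =>
    simp only [map_smul, toTensorAlgebra_tprod, toDirectSum_tensorPower_tprod, DirectSum.of_smul]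
  | add x y hx hy => simp [hx, hy]

lemma toTensorAlgebra_injective :
    Function.Injective (toTensorAlgebra : TensorPower R d M →ₗ[R] TensorAlgebra R M) :=
  fun x y h => DirectSum.of_injective (β := fun i => TensorPower R i M) d <| by
    simpa [toDirectSum_toTensorAlgebra] using congrArg toDirectSum h

lemma algebraMapInv_toTensorAlgebra (x : TensorPower R (d + 1) M) :
    algebraMapInv (toTensorAlgebra x) = 0 := by
  induction x using PiTensorProduct.induction_on with
  | smul_tprod c f => simp [tprod_apply, List.ofFn_succ, algebraMapInv]
  | add x y hx hy => simp [hx, hy]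

def snoc (v : M) : TensorPower R d M →ₗ[R] TensorPower R (d + 1) M :=
  PiTensorProduct.lift <|
    (LinearMap.applyₗ v).compMultilinearMap
      (PiTensorProduct.tprod R : MultilinearMap R (fun _ : Fin (d + 1) => M) _).curryRight

def cons (v : M) : TensorPower R d M →ₗ[R] TensorPower R (d + 1) M :=
  PiTensorProduct.lift <|
    (PiTensorProduct.tprod R : MultilinearMap R (fun _ : Fin (d + 1) => M) _).curryLeft v

@[simp]
lemma snoc_tprod (v : M) (f : Fin d → M) :
    snoc v (PiTensorProduct.tprod R f) =
      PiTensorProduct.tprod R (Fin.snoc f v : Fin (d + 1) → M) := by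
  simp [snoc]

@[simp]
lemma cons_tprod (v : M) (f : Fin d → M) :
    cons v (PiTensorProduct.tprod R f) =
      PiTensorProduct.tprod R (Fin.cons v f : Fin (d + 1) → M) := by
  simp [cons]

lemma toTensorAlgebra_snoc (v : M) (x : TensorPower R d M) :
    toTensorAlgebra (snoc v x) = toTensorAlgebra x * ι R v := by
  induction x using PiTensorProduct.induction_on with
  | smul_tprod c f =>
    simp only [map_smul, snoc_tprod, toTensorAlgebra_tprod, tprod_apply, List.ofFn_succ',
      List.prod_concat, Fin.snoc_castSucc, Fin.snoc_last, smul_mul_assoc]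
  | add x y hx hy => simp [hx, hy, add_mul]

lemma toTensorAlgebra_cons (v : M) (x : TensorPower R d M) :
    toTensorAlgebra (cons v x) = ι R v * toTensorAlgebra x := by
  induction x using PiTensorProduct.induction_on with
  | smul_tprod c f => simp [tprod_apply, List.ofFn_succ]
  | add x y hx hy => simp [hx, hy, mul_add]

end TensorPower

section RightAction

variable (k : Type*) [Field k] (n r : ℕ)

lemma ract_single (σ : Equiv.Perm (Fin r)) (c : k) :
    ract k n r (MonoidAlgebra.single σ c) = c • permAct k n r σ := by
  simp [ract, rho]

lemma ract_one : ract k n r 1 = 1 := by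
  simp [ract]

lemma ract_add (x y : MonoidAlgebra k (Equiv.Perm (Fin r))) :
    ract k n r (x + y) = ract k n r x + ract k n r y := by
  simp [ract]

lemma ract_sub (x y : MonoidAlgebra k (Equiv.Perm (Fin r))) :
    ract k n r (x - y) = ract k n r x - ract k n r y := by
  simp [ract]

lemma ract_smul (c : k) (x : MonoidAlgebra k (Equiv.Perm (Fin r))) :
    ract k n r (c • x) = c • ract k n r x := by
  simp [ract]

/-- Evaluated on `e₁ ⊗ ⋯ ⊗ e_r`, `ract k n r x` has the coefficient `x τ` on the basis tensor
`e_{τ 1} ⊗ ⋯ ⊗ e_{τ r}`, so `x` can be read off from its action. -/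
lemma ract_injective (h : r ≤ n) : Function.Injective (ract k n r) := by
  let e : Fin r → Fin n → k := fun i => Pi.single (Fin.castLE h i) 1
  let coeffAt (τ : Equiv.Perm (Fin r)) : TP k n r →ₗ[k] k := PiTensorProduct.lift <|
    (MultilinearMap.mkPiAlgebra k (Fin r) k).compLinearMap
      fun i => LinearMap.proj (Fin.castLE h (τ i))
  have key (x : MonoidAlgebra k (Equiv.Perm (Fin r))) (τ : Equiv.Perm (Fin r)) :
      coeffAt τ (ract k n r x (PiTensorProduct.tprod k e)) = x.coeff τ := by
    induction x using MonoidAlgebra.induction_linear with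
    | zero => simp [ract]
    | add x y hx hy => simp [ract_add, hx, hy]
    | single σ c =>
      have hστ : (∀ i, τ i = σ i) ↔ σ = τ := by
        simp [Equiv.ext_iff, eq_comm]
      simp [coeffAt, e, ract_single, permAct_tprod, Pi.single_apply, Finset.prod_boole, hστ,
        Finsupp.single_apply]
  intro x y hxy
  ext τ
  rw [← key, hxy, key]

end RightAction

section DynkinElement

variable (k : Type*) [Field k]

noncomputable def dynkinElement (r : ℕ) : MonoidAlgebra k (Equiv.Perm (Fin r)) :=
  (((List.finRange r).drop 1).map fun i =>
    1 - MonoidAlgebra.of k (Equiv.Perm (Fin r)) (Fin.cycleRange i)⁻¹).prod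

lemma dsw_eq_inv_smul_dynkinElement (r : ℕ) : dsw k r = (r : k)⁻¹ • dynkinElement k r := rfl

lemma viaEmbedding_castSuccEmb_last {r : ℕ} (σ : Equiv.Perm (Fin r)) :
    σ.viaEmbedding Fin.castSuccEmb (Fin.last r) = Fin.last r :=
  Equiv.Perm.viaEmbedding_apply_of_notMem _ _ _ (by simp)

lemma viaEmbedding_castSuccEmb_castSucc {r : ℕ} (σ : Equiv.Perm (Fin r)) (j : Fin r) :
    σ.viaEmbedding Fin.castSuccEmb j.castSucc = (σ j).castSucc :=
  Equiv.Perm.viaEmbedding_apply σ Fin.castSuccEmb j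

lemma viaEmbedding_castSuccEmb_cycleRange {r : ℕ} (i : Fin r) :
    (Fin.cycleRange i).viaEmbedding Fin.castSuccEmb = Fin.cycleRange i.castSucc := by
  refine Equiv.ext fun j => ?_
  induction j using Fin.lastCases with
  | last =>
    rw [viaEmbedding_castSuccEmb_last, Fin.cycleRange_of_gt (Fin.castSucc_lt_last i)]
  | cast j =>
    rw [viaEmbedding_castSuccEmb_castSucc]
    rcases le_or_gt j i with hji | hij
    · refine Fin.ext ?_
      simp only [Fin.val_castSucc, Fin.coe_cycleRange_of_le hji,
        Fin.coe_cycleRange_of_le (Fin.castSucc_le_castSucc_iff.2 hji), Fin.castSucc_inj]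
    · simp [Fin.cycleRange_of_gt hij, Fin.cycleRange_of_gt (Fin.castSucc_lt_castSucc_iff.2 hij)]

lemma dynkinElement_succ (m : ℕ) :
    dynkinElement k (m + 2) =
      MonoidAlgebra.mapDomainAlgHom k k (Equiv.Perm.viaEmbeddingHom Fin.castSuccEmb)
          (dynkinElement k (m + 1)) *
        (1 - MonoidAlgebra.of k _ (Fin.cycleRange (Fin.last (m + 1)))⁻¹) := by
  rw [dynkinElement, List.finRange_succ_last (n := m + 1),
    List.drop_append_of_le_length (by simp), ← List.map_drop, List.map_append, List.prod_append,
    List.map_map, List.map_singleton, List.prod_singleton, dynkinElement, map_list_prod,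
    List.map_map]
  congr 2
  refine List.map_congr_left fun i _ => ?_
  simp only [Function.comp_apply, map_sub, map_one, MonoidAlgebra.mapDomainAlgHom_apply,
    MonoidAlgebra.of_apply, MonoidAlgebra.mapDomain_single, map_inv,
    Equiv.Perm.viaEmbeddingHom_apply, viaEmbedding_castSuccEmb_cycleRange]

end DynkinElement

section DynkinAction

variable (k : Type*) [Field k] (n : ℕ)

attribute [local instance 100] LieRing.ofAssociativeRing

open TensorAlgebra TensorPower

lemma permAct_viaEmbedding_snoc {r : ℕ} (σ : Equiv.Perm (Fin r)) (v : Fin n → k)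
    (x : TP k n r) :
    permAct k n (r + 1) (σ.viaEmbedding Fin.castSuccEmb) (snoc v x) =
      snoc v (permAct k n r σ x) := by
  induction x using PiTensorProduct.induction_on with
  | smul_tprod c f =>
    simp only [map_smul, snoc_tprod, permAct_tprod]
    congr 2
    funext i
    induction i using Fin.lastCases with
    | last => simp [viaEmbedding_castSuccEmb_last]
    | cast j => simp [viaEmbedding_castSuccEmb_castSucc]
  | add x y hx hy => simp only [map_add, hx, hy]

lemma ract_mapDomain_viaEmbedding_snoc {r : ℕ} (y : MonoidAlgebra k (Equiv.Perm (Fin r)))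
    (v : Fin n → k) (x : TP k n r) :
    ract k n (r + 1)
        (MonoidAlgebra.mapDomainAlgHom k k (Equiv.Perm.viaEmbeddingHom Fin.castSuccEmb) y)
        (snoc v x) =
      snoc v (ract k n r y x) := by
  induction y using MonoidAlgebra.induction_linear with
  | zero => simp [ract]
  | add y z hy hz => simp only [map_add, ract_add, LinearMap.add_apply, hy, hz]
  | single σ c =>
    simp [MonoidAlgebra.mapDomainAlgHom_apply, ract_single, Equiv.Perm.viaEmbeddingHom_apply,
      permAct_viaEmbedding_snoc]

lemma permAct_cycleRange_last_inv_snoc {r : ℕ} (v : Fin n → k) (x : TP k n r) :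
    permAct k n (r + 1) (Fin.cycleRange (Fin.last r))⁻¹ (snoc v x) = cons v x := by
  induction x using PiTensorProduct.induction_on with
  | smul_tprod c f =>
    simp only [map_smul, snoc_tprod, cons_tprod, permAct_tprod]
    congr 2
    funext i
    induction i using Fin.cases with
    | zero =>
      rw [Function.comp_apply, Equiv.Perm.inv_def, Fin.cycleRange_symm_zero, Fin.snoc_last,
        Fin.cons_zero]
    | succ j =>
      rw [Function.comp_apply, Equiv.Perm.inv_def, Fin.cycleRange_symm_succ, Fin.succAbove_last,
        Fin.snoc_castSucc, Fin.cons_succ]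
  | add x y hx hy => simp only [map_add, hx, hy]

lemma iotaR_ract_dynkinElement (m : ℕ) (x : TP k n (m + 1)) :
    iotaR k n (m + 1) (ract k n (m + 1) (dynkinElement k (m + 1)) x) =
      dynkinOperator k _ (iotaR k n (m + 1) x) := by
  induction m with
  | zero =>
    have h1 : dynkinElement k 1 = 1 := by simp [dynkinElement, List.finRange_succ]
    rw [h1, ract_one, Module.End.one_apply]
    induction x using PiTensorProduct.induction_on with
    | smul_tprod c f => simp [iotaR, TensorAlgebra.tprod_apply, dynkinOperator_ι]
    | add x y hx hy => rw [map_add, map_add, ← hx, ← hy]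
  | succ m ih =>
    suffices h : ∀ v y,
        iotaR k n (m + 2) (ract k n (m + 2) (dynkinElement k (m + 2)) (snoc v y)) =
          dynkinOperator k _ (iotaR k n (m + 2) (snoc v y)) by
      induction x using PiTensorProduct.induction_on with
      | smul_tprod c f =>
        rw [← Fin.snoc_init_self f, ← snoc_tprod, ← map_smul]
        exact h _ _
      | add x y hx hy => simp only [map_add, hx, hy]
    intro v y
    set z := ract k n (m + 1) (dynkinElement k (m + 1)) y
    calc iotaR k n (m + 2) (ract k n (m + 2) (dynkinElement k (m + 2)) (snoc v y))
        = iotaR k n (m + 2) (snoc v z - cons v z) := by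
          rw [dynkinElement_succ, ract_mul, Module.End.mul_apply,
            ract_mapDomain_viaEmbedding_snoc, ract_sub, ract_one, MonoidAlgebra.of_apply,
            ract_single, one_smul, LinearMap.sub_apply, Module.End.one_apply,
            permAct_cycleRange_last_inv_snoc]
      _ = ⁅iotaR k n (m + 1) z, ι k v⁆ := by
          simp [iotaR, toTensorAlgebra_snoc, toTensorAlgebra_cons, Ring.lie_def]
      _ = dynkinOperator k _ (iotaR k n (m + 2) (snoc v y)) := by
          rw [ih, iotaR, iotaR, toTensorAlgebra_snoc, dynkinOperator_mul_ι,
            algebraMapInv_toTensorAlgebra, zero_smul, add_zero]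

end DynkinAction

section LieIdempotent

variable (k : Type*) [Field k] (n : ℕ)

lemma ract_dynkinElement_mem_Lnr (m : ℕ) (x : TP k n (m + 1)) :
    ract k n (m + 1) (dynkinElement k (m + 1)) x ∈ Lnr k n (m + 1) := by
  rw [Lnr, Submodule.mem_comap, iotaR_ract_dynkinElement]
  exact TensorAlgebra.dynkinOperator_mem_lieSpan _

lemma ract_dynkinElement_of_mem_Lnr (m : ℕ) {x : TP k n (m + 1)} (hx : x ∈ Lnr k n (m + 1)) :
    ract k n (m + 1) (dynkinElement k (m + 1)) x = ((m + 1 : ℕ) : k) • x := by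
  apply TensorPower.toTensorAlgebra_injective
  change iotaR k n (m + 1) _ = iotaR k n (m + 1) _
  rw [iotaR_ract_dynkinElement, TensorAlgebra.dynkinOperator_eq_eulerOperator_of_mem_lieSpan hx,
    iotaR, TensorAlgebra.eulerOperator_toTensorAlgebra, map_smul, Nat.cast_smul_eq_nsmul]

lemma dynkinElement_mul_self (m : ℕ) :
    dynkinElement k (m + 1) * dynkinElement k (m + 1) =
      ((m + 1 : ℕ) : k) • dynkinElement k (m + 1) := by
  apply ract_injective k (m + 1) (m + 1) le_rfl
  refine LinearMap.ext fun x => ?_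
  rw [ract_mul, Module.End.mul_apply,
    ract_dynkinElement_of_mem_Lnr _ _ _ (ract_dynkinElement_mem_Lnr _ _ _ x), ract_smul,
    LinearMap.smul_apply]

end LieIdempotent

theorem statement_0_general (k : Type*) [Field k] (n r : ℕ)
    (hchar : ¬ ((ringChar k : ℕ) ∣ r)) :
    IsIdempotentElem (dsw k r) ∧
    LinearMap.range (ract k n r (dsw k r)) = Lnr k n r := by
  have hr : (r : k) ≠ 0 := fun h => hchar ((ringChar.spec k r).mp h)
  obtain ⟨m, rfl⟩ : ∃ m, r = m + 1 := Nat.exists_eq_succ_of_ne_zero (by rintro rfl; simp at hr)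
  rw [dsw_eq_inv_smul_dynkinElement]
  refine ⟨?_, le_antisymm ?_ fun x hx => ⟨x, ?_⟩⟩
  · rw [IsIdempotentElem, smul_mul_smul_comm, dynkinElement_mul_self, smul_smul]
    congr 1
    field_simp
  · rintro _ ⟨x, rfl⟩
    rw [ract_smul, LinearMap.smul_apply]
    exact Submodule.smul_mem _ _ (ract_dynkinElement_mem_Lnr k n m x)
  · rw [ract_smul, LinearMap.smul_apply, ract_dynkinElement_of_mem_Lnr k n m hx, smul_smul,
      inv_mul_cancel₀ hr, one_smul]

/-- if `char k ∤ r` then the Dynkin-Specht-Wever element is a Lie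
idempotent: `e_r² = e_r` and `T^{n,r}·e_r = L^{n,r}`. -/
theorem statement_0 (k : Type*) [Field k] (n r : ℕ) (hn : 0 < n) (hr : 0 < r)
    (hchar : ¬ ((ringChar k : ℕ) ∣ r)) :
    IsIdempotentElem (dsw k r) ∧
    LinearMap.range (ract k n r (dsw k r)) = Lnr k n r :=
  statement_0_general k n r hchar
end

section
/- Suppose k has cardinality strictly larger than r, the characteristic of k does not divide r, and k contains a primitive r-th root of unity. If e and e′ are Lie idempotents in kΣ_r, then the triple (k GL_n(k), L^{n,r}, e kΣ_r e) satisfies Schur–Weyl duality if and only if the triple (k GL_n(k), L^{n,r}, e′ kΣ_r e′) does. -/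
open MulOpposite

noncomputable section

attribute [local instance 100] LieRing.ofAssociativeRing

variable (k : Type*) [Field k] (n r : ℕ)

end

/-!
A Lie idempotent `e` acts as the identity on `L^{n,r} = T^{n,r}·e`, so on `L^{n,r}` the element
`ebe` acts exactly as `e'(ebe)e' ∈ e' kΣ_r e'`. Hence `e kΣ_r e` and `e' kΣ_r e'` have the same
image in `End_k(L^{n,r})`, and so the same commutant: both halves of Schur–Weyl duality compare
the same pairs of subalgebras.
-/

section LieIdempotent

variable {k : Type*} [Field k] {n r : ℕ} {e e' : MonoidAlgebra k (Equiv.Perm (Fin r))}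

lemma isIdempotentElem_ract (he : IsIdempotentElem e) : IsIdempotentElem (ract k n r e) :=
  congrArg unop (he.map (rho k n r))

lemma ract_apply_of_mem_Lnr (he : IsIdempotentElem e)
    (hLie : LinearMap.range (ract k n r e) = Lnr k n r) {x : TP k n r} (hx : x ∈ Lnr k n r) :
    ract k n r e x = x :=
  (LinearMap.IsIdempotentElem.mem_range_iff (isIdempotentElem_ract he)).mp (hLie ▸ hx)

lemma psiRes_eq_psiRes_mul (he' : IsIdempotentElem e')
    (hLie : LinearMap.range (ract k n r e) = Lnr k n r)
    (hLie' : LinearMap.range (ract k n r e') = Lnr k n r)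
    (b : MonoidAlgebra k (Equiv.Perm (Fin r))) :
    psiRes k n r e hLie b = psiRes k n r e' hLie' (e * b * e) := by
  ext x
  have hx : ract k n r e' x = x := ract_apply_of_mem_Lnr he' hLie' x.2
  have hebe : ract k n r e' (ract k n r (e * b * e) x) = ract k n r (e * b * e) x :=
    ract_apply_of_mem_Lnr he' hLie' (ract_mem_Lnr k n r e hLie b x x.2)
  simp only [psiRes, LinearMap.coe_restrict_apply]
  rw [ract_mul k n r (e' * _) e', ract_mul k n r e', Module.End.mul_apply, Module.End.mul_apply,
    hx, hebe]

lemma range_psiRes_eq (he : IsIdempotentElem e) (he' : IsIdempotentElem e')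
    (hLie : LinearMap.range (ract k n r e) = Lnr k n r)
    (hLie' : LinearMap.range (ract k n r e') = Lnr k n r) :
    Set.range (psiRes k n r e hLie) = Set.range (psiRes k n r e' hLie') := by
  apply Set.Subset.antisymm
  · rintro _ ⟨b, rfl⟩
    exact ⟨e * b * e, (psiRes_eq_psiRes_mul he' hLie hLie' b).symm⟩
  · rintro _ ⟨b, rfl⟩
    exact ⟨e' * b * e', (psiRes_eq_psiRes_mul he hLie' hLie b).symm⟩

lemma EndeBe_eq_centralizer (hLie : LinearMap.range (ract k n r e) = Lnr k n r) :
    EndeBe k n r e hLie = Set.centralizer (Set.range (psiRes k n r e hLie)) := by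
  ext f
  simp only [EndeBe, Set.mem_ofPred_eq, Set.mem_centralizer_iff, Set.forall_mem_range,
    Module.End.mul_eq_comp, eq_comm]

end LieIdempotent

theorem statement_14_general (k : Type*) [Field k] (n r : ℕ)
    (e e' : MonoidAlgebra k (Equiv.Perm (Fin r)))
    (he : IsIdempotentElem e) (he' : IsIdempotentElem e')
    (hLie : LinearMap.range (ract k n r e) = Lnr k n r)
    (hLie' : LinearMap.range (ract k n r e') = Lnr k n r) :
    LieSWD k n r e hLie ↔ LieSWD k n r e' hLie' := by
  rw [LieSWD, LieSWD, EndeBe_eq_centralizer, EndeBe_eq_centralizer,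
    range_psiRes_eq he he' hLie hLie']

/-- if `|k| > r`, `char k ∤ r` and `k` contains a primitive `r`-th root
of unity, then for Lie idempotents `e, e\'`, the triple
`(k GL_n(k), L^{n,r}, e kΣ_r e)` satisfies Schur-Weyl duality iff
`(k GL_n(k), L^{n,r}, e\' kΣ_r e\')` does. -/
theorem statement_14 (k : Type*) [Field k] (n r : ℕ) (hn : 0 < n) (hr : 0 < r)
    (hcard : (r : Cardinal) < Cardinal.mk k)
    (hchar : ¬ ((ringChar k : ℕ) ∣ r))
    (ζ : k) (hζ : IsPrimitiveRoot ζ r)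
    (e e' : MonoidAlgebra k (Equiv.Perm (Fin r)))
    (he : IsIdempotentElem e) (he' : IsIdempotentElem e')
    (hLie : LinearMap.range (ract k n r e) = Lnr k n r)
    (hLie' : LinearMap.range (ract k n r e') = Lnr k n r) :
    LieSWD k n r e hLie ↔ LieSWD k n r e' hLie' :=
  statement_14_general k n r e e' he he' hLie hLie'
end
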